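/- arXiv:2303.14550 — 2 statements merged into one kernel-verified Lean document; each statement's English description precedes it below -/
import Mathlib

section
/- Fix 0 ≤ μ ≤ 1/2. For every set T ⊆ V with μ·Vol(G) ≤ Vol(T) ≤ Vol(G)/2, one has λ_μ ≤ 2·φ(T); consequently λ_μ/2 is a lower bound for the μ-conductance φ_μ(G) = min{φ(S) : μ·Vol(G) ≤ Vol(S) ≤ Vol(G)/2}. -/
open Matrix Finset

noncomputable section

/-- Degree vector `d = A·1` of a weighted graph with symmetric adjacency matrix `A`. -/
def gDeg {n : ℕ} (A : Matrix (Fin n) (Fin n) ℝ) (i : Fin n) : ℝ := ∑ j, A i j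

/-- Degree matrix `D = Diag(d)`. -/
def gDegMat {n : ℕ} (A : Matrix (Fin n) (Fin n) ℝ) : Matrix (Fin n) (Fin n) ℝ :=
  Matrix.diagonal (gDeg A)

/-- Laplacian `L = D − A`. -/
def gLap {n : ℕ} (A : Matrix (Fin n) (Fin n) ℝ) : Matrix (Fin n) (Fin n) ℝ :=
  gDegMat A - A

/-- `Vol(S) = Σ_{i∈S} d_i`. -/
def gVol {n : ℕ} (A : Matrix (Fin n) (Fin n) ℝ) (S : Finset (Fin n)) : ℝ :=
  ∑ i ∈ S, gDeg A i

/-- `Vol(G) = Σ_i d_i`. -/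
def gVolG {n : ℕ} (A : Matrix (Fin n) (Fin n) ℝ) : ℝ := ∑ i, gDeg A i

/-- `∂S = Σ_{i∈S, j∉S} A_{ij}`. -/
def gBdry {n : ℕ} (A : Matrix (Fin n) (Fin n) ℝ) (S : Finset (Fin n)) : ℝ :=
  ∑ i ∈ S, ∑ j ∈ Sᶜ, A i j

/-- Conductance `φ(S) = ∂S / min(Vol S, Vol Sᶜ)`. -/
def gCond {n : ℕ} (A : Matrix (Fin n) (Fin n) ℝ) (S : Finset (Fin n)) : ℝ :=
  gBdry A S / min (gVol A S) (gVol A Sᶜ)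

/-- Feasibility for the μ-spectral program (μ-Spectral Cut). -/
def muSpectralFeasible {n : ℕ} (A : Matrix (Fin n) (Fin n) ℝ) (μ : ℝ) (x : Fin n → ℝ) : Prop :=
  x ⬝ᵥ (gDegMat A *ᵥ x) = 1 ∧ x ⬝ᵥ gDeg A = 0 ∧
  (∀ i, |x i| ≤ Real.sqrt ((1 - μ) / (μ * gVolG A))) ∧
  (∀ i, Real.sqrt (μ / ((1 - μ) * gVolG A)) ≤ |x i|)

/-- `λ_μ`, the optimal value of the μ-spectral program. -/
def lamMu {n : ℕ} (A : Matrix (Fin n) (Fin n) ℝ) (μ : ℝ) : ℝ :=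
  sInf {r | ∃ x : Fin n → ℝ, muSpectralFeasible A μ x ∧ r = x ⬝ᵥ (gLap A *ᵥ x)}

/-!
For a cut `T` with `t = Vol T`, `c = Vol Tᶜ` and `G = t + c`, take the test vector equal to
`s / t` on `T` and to `-s / c` off `T`, where `s = √(t c / G)`. It satisfies `xᵀDx = 1` and
`xᵀd = 0`, and `x_i²` is `c / (G t)` or `t / (G c)`, which respect the box constraints as soon as
both sides of the cut have volume between `μ G` and `(1 - μ) G`. Its Rayleigh quotient is
`∂T (s/t + s/c)² = ∂T G / (t c)`, at most `2 ∂T / t = 2 φ(T)` since `c ≥ G / 2`.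
If `μ·Vol G = 0`, the upper box constraint forces `x = 0`, so the program is infeasible and
`λ_μ = sInf ∅ = 0`.
-/

section Laplacian

variable {n : ℕ} (A : Matrix (Fin n) (Fin n) ℝ)

lemma gDeg_nonneg (hA : ∀ i j, 0 ≤ A i j) (i : Fin n) : 0 ≤ gDeg A i :=
  sum_nonneg fun j _ => hA i j

lemma gVol_nonneg (hA : ∀ i j, 0 ≤ A i j) (S : Finset (Fin n)) : 0 ≤ gVol A S :=
  sum_nonneg fun i _ => gDeg_nonneg A hA i

lemma gVol_add_gVol_compl (S : Finset (Fin n)) : gVol A S + gVol A Sᶜ = gVolG A :=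
  sum_add_sum_compl S (gDeg A)

lemma gBdry_nonneg (hA : ∀ i j, 0 ≤ A i j) (S : Finset (Fin n)) : 0 ≤ gBdry A S :=
  sum_nonneg fun i _ => sum_nonneg fun j _ => hA i j

lemma gBdry_compl (hA : A.IsSymm) (S : Finset (Fin n)) : gBdry A Sᶜ = gBdry A S := by
  unfold gBdry
  rw [compl_compl]
  exact sum_comm.trans (sum_congr rfl fun i _ => sum_congr rfl fun j _ => hA.apply i j)

lemma gCond_nonneg (hA : ∀ i j, 0 ≤ A i j) (S : Finset (Fin n)) : 0 ≤ gCond A S :=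
  div_nonneg (gBdry_nonneg A hA S) (le_min (gVol_nonneg A hA S) (gVol_nonneg A hA Sᶜ))

lemma dotProduct_gDegMat_mulVec (x : Fin n → ℝ) :
    x ⬝ᵥ (gDegMat A *ᵥ x) = ∑ i, gDeg A i * x i ^ 2 := by
  simp only [gDegMat, mulVec_diagonal, dotProduct]
  exact sum_congr rfl fun i _ => by ring

lemma dotProduct_gLap_mulVec (hA : A.IsSymm) (x : Fin n → ℝ) :
    x ⬝ᵥ (gLap A *ᵥ x) = (∑ i, ∑ j, A i j * (x i - x j) ^ 2) / 2 := by
  have hL : x ⬝ᵥ (gLap A *ᵥ x) = ∑ i, ∑ j, A i j * (x i ^ 2 - x i * x j) := by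
    rw [gLap, sub_mulVec, dotProduct_sub, dotProduct_gDegMat_mulVec]
    simp only [gDeg, dotProduct, mulVec, sum_mul, mul_sum, ← sum_sub_distrib]
    exact sum_congr rfl fun i _ => sum_congr rfl fun j _ => by ring
  have hswap : ∑ i, ∑ j, A i j * x j ^ 2 = ∑ i, ∑ j, A i j * x i ^ 2 := by
    exact sum_comm.trans (sum_congr rfl fun i _ => sum_congr rfl fun j _ => by rw [hA.apply])
  have hexp : ∀ i j, A i j * (x i - x j) ^ 2
      = 2 * (A i j * (x i ^ 2 - x i * x j)) + (A i j * x j ^ 2 - A i j * x i ^ 2) :=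
    fun i j => by ring
  simp only [hexp, sum_add_distrib, sum_sub_distrib, ← mul_sum, hswap, hL]
  ring

lemma gLap_quadForm_nonneg (hA : A.IsSymm) (hA' : ∀ i j, 0 ≤ A i j) (x : Fin n → ℝ) :
    0 ≤ x ⬝ᵥ (gLap A *ᵥ x) := by
  rw [dotProduct_gLap_mulVec A hA]
  exact div_nonneg (sum_nonneg fun i _ => sum_nonneg fun j _ =>
    mul_nonneg (hA' i j) (sq_nonneg _)) zero_le_two

end Laplacian

section CutVector

variable {n : ℕ} (A : Matrix (Fin n) (Fin n) ℝ)

def cutVec (T : Finset (Fin n)) (a b : ℝ) : Fin n → ℝ := fun i => if i ∈ T then a else -b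

@[simp] lemma cutVec_of_mem {T : Finset (Fin n)} {a b : ℝ} {i : Fin n} (hi : i ∈ T) :
    cutVec T a b i = a :=
  if_pos hi

@[simp] lemma cutVec_of_mem_compl {T : Finset (Fin n)} {a b : ℝ} {i : Fin n} (hi : i ∈ Tᶜ) :
    cutVec T a b i = -b :=
  if_neg (mem_compl.mp hi)

variable (T : Finset (Fin n)) (a b : ℝ)

lemma cutVec_dotProduct_gDeg : cutVec T a b ⬝ᵥ gDeg A = a * gVol A T - b * gVol A Tᶜ := by
  rw [dotProduct, ← sum_add_sum_compl T, gVol, gVol, mul_sum, mul_sum, sub_eq_add_neg,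
    ← sum_neg_distrib]
  congr 1 <;> refine sum_congr rfl fun i hi => ?_
  · simp [hi]
  · simp [hi]

lemma cutVec_gDegMat_quadForm :
    cutVec T a b ⬝ᵥ (gDegMat A *ᵥ cutVec T a b) = a ^ 2 * gVol A T + b ^ 2 * gVol A Tᶜ := by
  rw [dotProduct_gDegMat_mulVec, ← sum_add_sum_compl T, gVol, gVol, mul_sum, mul_sum]
  congr 1 <;> refine sum_congr rfl fun i hi => ?_
  · simp [hi, mul_comm]
  · simp [hi, mul_comm]

lemma cutVec_gLap_quadForm (hA : A.IsSymm) :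
    cutVec T a b ⬝ᵥ (gLap A *ᵥ cutVec T a b) = gBdry A T * (a + b) ^ 2 := by
  have hT : ∀ i ∈ T, ∑ j, A i j * (cutVec T a b i - cutVec T a b j) ^ 2
      = (∑ j ∈ Tᶜ, A i j) * (a + b) ^ 2 := by
    intro i hi
    rw [← sum_add_sum_compl T, sum_mul, sum_eq_zero fun j hj => by simp [hi, hj], zero_add]
    exact sum_congr rfl fun j hj => by simp only [cutVec_of_mem hi, cutVec_of_mem_compl hj]; ring
  have hTc : ∀ i ∈ Tᶜ, ∑ j, A i j * (cutVec T a b i - cutVec T a b j) ^ 2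
      = (∑ j ∈ T, A i j) * (a + b) ^ 2 := by
    intro i hi
    rw [← sum_add_sum_compl T, sum_mul, sum_eq_zero (s := Tᶜ) fun j hj => by simp [hi, hj],
      add_zero]
    exact sum_congr rfl fun j hj => by simp only [cutVec_of_mem hj, cutVec_of_mem_compl hi]; ring
  rw [dotProduct_gLap_mulVec A hA, ← sum_add_sum_compl T, sum_congr rfl hT, sum_congr rfl hTc,
    ← sum_mul, ← sum_mul]
  have hsymm := gBdry_compl A hA T
  simp only [gBdry, compl_compl] at hsymm ⊢
  rw [hsymm]
  ring

end CutVector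

lemma div_mul_mem_Icc_of_vol_bounds {μ G t c : ℝ} (hμ : 0 < μ) (hG : 0 < G)
    (ht : μ * G ≤ t) (ht' : t ≤ (1 - μ) * G) (hc : μ * G ≤ c) (hc' : c ≤ (1 - μ) * G) :
    c / (G * t) ∈ Set.Icc (μ / ((1 - μ) * G)) ((1 - μ) / (μ * G)) := by
  have hμ1 : 0 < 1 - μ := by nlinarith
  have htpos : 0 < t := by nlinarith
  have hμG : 0 ≤ μ * G := by positivity
  have hμG' : 0 ≤ (1 - μ) * G := by positivity
  rw [Set.mem_Icc, div_le_div_iff₀ (by positivity) (by positivity),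
    div_le_div_iff₀ (by positivity) (by positivity)]
  constructor
  · nlinarith [mul_le_mul_of_nonneg_left ht' hμG, mul_le_mul_of_nonneg_right hc hμG']
  · nlinarith [mul_le_mul_of_nonneg_right hc' hμG, mul_le_mul_of_nonneg_left ht hμG']

section SpectralProgram

variable {n : ℕ} (A : Matrix (Fin n) (Fin n) ℝ) {μ : ℝ}

lemma lamMu_le_of_feasible (hA : A.IsSymm) (hA' : ∀ i j, 0 ≤ A i j) {x : Fin n → ℝ}
    (hx : muSpectralFeasible A μ x) : lamMu A μ ≤ x ⬝ᵥ (gLap A *ᵥ x) :=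
  csInf_le ⟨0, by rintro r ⟨y, -, rfl⟩; exact gLap_quadForm_nonneg A hA hA' y⟩
    ⟨x, hx, rfl⟩

lemma muSpectralFeasible.mul_gVolG_pos (hμ : μ ≤ 1) {x : Fin n → ℝ}
    (hx : muSpectralFeasible A μ x) : 0 < μ * gVolG A := by
  by_contra! h
  have hzero : Real.sqrt ((1 - μ) / (μ * gVolG A)) = 0 :=
    Real.sqrt_eq_zero'.mpr (div_nonpos_of_nonneg_of_nonpos (by linarith) h)
  have hx0 : x = 0 := funext fun i => abs_nonpos_iff.mp ((hx.2.2.1 i).trans_eq hzero)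
  simpa [hx0] using hx.1

lemma lamMu_eq_zero_of_mul_gVolG_nonpos (hμ : μ ≤ 1) (h : μ * gVolG A ≤ 0) :
    lamMu A μ = 0 := by
  have hempty : {r | ∃ x, muSpectralFeasible A μ x ∧ r = x ⬝ᵥ (gLap A *ᵥ x)} = ∅ :=
    Set.eq_empty_of_forall_notMem fun _ ⟨x, hx, _⟩ => h.not_gt (hx.mul_gVolG_pos A hμ)
  rw [lamMu, hempty, Real.sInf_empty]

lemma muSpectralFeasible_of_sq_mem_Icc {x : Fin n → ℝ} (h1 : x ⬝ᵥ (gDegMat A *ᵥ x) = 1)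
    (h2 : x ⬝ᵥ gDeg A = 0)
    (hbox : ∀ i, x i ^ 2 ∈ Set.Icc (μ / ((1 - μ) * gVolG A)) ((1 - μ) / (μ * gVolG A))) :
    muSpectralFeasible A μ x :=
  ⟨h1, h2, fun i => Real.abs_le_sqrt (hbox i).2,
    fun i => Real.sqrt_sq_eq_abs (x i) ▸ Real.sqrt_le_sqrt (hbox i).1⟩

end SpectralProgram

theorem lamMu_le_gBdry_mul_div {n : ℕ} (A : Matrix (Fin n) (Fin n) ℝ) (hA : A.IsSymm)
    (hA' : ∀ i j, 0 ≤ A i j) {μ : ℝ} (hμG : 0 < μ * gVolG A) (T : Finset (Fin n))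
    (hT : μ * gVolG A ≤ gVol A T) (hT' : gVol A T ≤ (1 - μ) * gVolG A)
    (hTc : μ * gVolG A ≤ gVol A Tᶜ) (hTc' : gVol A Tᶜ ≤ (1 - μ) * gVolG A) :
    lamMu A μ ≤ gBdry A T * gVolG A / (gVol A T * gVol A Tᶜ) := by
  have hvol := gVol_add_gVol_compl A T
  set t := gVol A T
  set c := gVol A Tᶜ
  set G := gVolG A
  have ht : 0 < t := hμG.trans_le hT
  have hc : 0 < c := hμG.trans_le hTc
  have hG : 0 < G := by linarith
  have hμ : 0 < μ := pos_of_mul_pos_left hμG hG.le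
  set s := Real.sqrt (t * c / G)
  have hs : s ^ 2 = t * c / G := Real.sq_sqrt (by positivity)
  set x := cutVec T (s / t) (s / c)
  have hnorm : x ⬝ᵥ (gDegMat A *ᵥ x) = 1 := by
    rw [show x ⬝ᵥ (gDegMat A *ᵥ x) = (s / t) ^ 2 * t + (s / c) ^ 2 * c from
      cutVec_gDegMat_quadForm A T _ _, div_pow, div_pow, hs]
    field_simp
    linarith
  have horth : x ⬝ᵥ gDeg A = 0 := by
    rw [show x ⬝ᵥ gDeg A = s / t * t - s / c * c from cutVec_dotProduct_gDeg A T _ _]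
    field_simp
    ring
  have hbox : ∀ i, x i ^ 2 ∈ Set.Icc (μ / ((1 - μ) * G)) ((1 - μ) / (μ * G)) := by
    intro i
    by_cases hi : i ∈ T
    · rw [show x i = s / t from cutVec_of_mem hi, div_pow, hs]
      convert div_mul_mem_Icc_of_vol_bounds hμ hG hT hT' hTc hTc' using 1
      field_simp
    · rw [show x i = -(s / c) from cutVec_of_mem_compl (mem_compl.mpr hi), neg_sq, div_pow, hs]
      convert div_mul_mem_Icc_of_vol_bounds hμ hG hTc hTc' hT hT' using 1
      field_simp
  calc lamMu A μ ≤ x ⬝ᵥ (gLap A *ᵥ x) :=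
        lamMu_le_of_feasible A hA hA' (muSpectralFeasible_of_sq_mem_Icc A hnorm horth hbox)
    _ = gBdry A T * (s / t + s / c) ^ 2 := cutVec_gLap_quadForm A T _ _ hA
    _ = gBdry A T * G / (t * c) := by
      rw [div_add_div _ _ ht.ne' hc.ne', div_pow, mul_pow,
        show (s * c + t * s) ^ 2 = s ^ 2 * G ^ 2 by rw [← hvol]; ring, hs]
      field_simp

lemma gBdry_mul_div_le_two_gCond {n : ℕ} (A : Matrix (Fin n) (Fin n) ℝ)
    (hA : ∀ i j, 0 ≤ A i j) (T : Finset (Fin n)) (hT : 0 < gVol A T)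
    (hT' : gVol A T ≤ gVolG A / 2) :
    gBdry A T * gVolG A / (gVol A T * gVol A Tᶜ) ≤ 2 * gCond A T := by
  have hvol := gVol_add_gVol_compl A T
  have hTc : gVol A T ≤ gVol A Tᶜ := by linarith
  rw [gCond, min_eq_left hTc, mul_div_assoc', div_le_div_iff₀ (mul_pos hT (hT.trans_le hTc)) hT]
  have hGle : gVolG A * gVol A T ≤ 2 * gVol A Tᶜ * gVol A T := by nlinarith
  calc gBdry A T * gVolG A * gVol A T = gBdry A T * (gVolG A * gVol A T) := by ring
    _ ≤ gBdry A T * (2 * gVol A Tᶜ * gVol A T) :=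
        mul_le_mul_of_nonneg_left hGle (gBdry_nonneg A hA T)
    _ = 2 * gBdry A T * (gVol A T * gVol A Tᶜ) := by ring

theorem lamMu_le_two_cond_general {n : ℕ} (A : Matrix (Fin n) (Fin n) ℝ)
    (hA_symm : A.IsSymm) (hA_nonneg : ∀ i j, 0 ≤ A i j)
    (μ : ℝ) (hμ1 : μ ≤ 1/2) :
    ∀ T : Finset (Fin n), μ * gVolG A ≤ gVol A T → gVol A T ≤ gVolG A / 2 →
      lamMu A μ ≤ 2 * gCond A T ∧ lamMu A μ / 2 ≤ gCond A T := by
  intro T hT hT'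
  suffices h : lamMu A μ ≤ 2 * gCond A T from ⟨h, by linarith⟩
  rcases le_or_gt (μ * gVolG A) 0 with hμG | hμG
  · rw [lamMu_eq_zero_of_mul_gVolG_nonpos A (by linarith) hμG]
    linarith [gCond_nonneg A hA_nonneg T]
  have hvol := gVol_add_gVol_compl A T
  have hG : 0 ≤ gVolG A := by linarith [gVol_nonneg A hA_nonneg T, gVol_nonneg A hA_nonneg Tᶜ]
  calc lamMu A μ ≤ gBdry A T * gVolG A / (gVol A T * gVol A Tᶜ) :=
        lamMu_le_gBdry_mul_div A hA_symm hA_nonneg hμG T hT (by nlinarith) (by nlinarith)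
          (by nlinarith)
    _ ≤ 2 * gCond A T := gBdry_mul_div_le_two_gCond A hA_nonneg T (hμG.trans_le hT) hT'

/-- **Lemma (easy side of Cheeger for μ-conductance).** For `0 ≤ μ ≤ 1/2`, every set `T` with
`μ·Vol(G) ≤ Vol(T) ≤ Vol(G)/2` satisfies `λ_μ ≤ 2·φ(T)`; consequently `λ_μ/2` is a lower
bound for the μ-conductance. -/
theorem lamMu_le_two_cond {n : ℕ} (A : Matrix (Fin n) (Fin n) ℝ)
    (hA_symm : A.IsSymm) (hA_nonneg : ∀ i j, 0 ≤ A i j) (hA_diag : ∀ i, A i i = 0)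
    (μ : ℝ) (hμ0 : 0 ≤ μ) (hμ1 : μ ≤ 1/2) :
    ∀ T : Finset (Fin n), μ * gVolG A ≤ gVol A T → gVol A T ≤ gVolG A / 2 →
      lamMu A μ ≤ 2 * gCond A T ∧ lamMu A μ / 2 ≤ gCond A T :=
  lamMu_le_two_cond_general A hA_symm hA_nonneg μ hμ1
end
end

section
/- Fix 0 < μ < 1/2 and θ ≥ 0. Suppose (Y*, s*, λ*, β*, γ*, g*, l*) satisfies the KKT conditions of the low-rank program (as listed in the context) and that Z* = L + θI − λ*D − β*ddᵀ − Diag(γ*) is positive semidefinite. Then Tr(Y*ᵀLY*) ≤ λ̂_μ^sdp, where λ̂_μ^sdp is the infimum of Tr((L + θI)X) over matrices X feasible for the μ-conductance SDP. -/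
open Matrix Finset

noncomputable section

/-- Feasibility for the μ-conductance SDP (μ-Cond SDP). -/
def sdpFeasible {n : ℕ} (A : Matrix (Fin n) (Fin n) ℝ) (μ : ℝ)
    (X : Matrix (Fin n) (Fin n) ℝ) : Prop :=
  X.PosSemidef ∧ (gDegMat A * X).trace = 1 ∧
  (vecMulVec (gDeg A) (gDeg A) * X).trace = 0 ∧
  (∀ i, X i i ≤ (1 - μ) / (μ * gVolG A)) ∧
  (∀ i, μ / ((1 - μ) * gVolG A) ≤ X i i)

/-- `λ_μ^sdp`, the optimal value of the μ-conductance SDP. -/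
def lamMuSdp {n : ℕ} (A : Matrix (Fin n) (Fin n) ℝ) (μ : ℝ) : ℝ :=
  sInf {r | ∃ X : Matrix (Fin n) (Fin n) ℝ, sdpFeasible A μ X ∧ r = (gLap A * X).trace}

/-- The KKT conditions of the low-rank program (μ-Cond LRSDP) for the primal-dual
tuple `(Y, s; lam, β, γ, g, l)`. -/
def lrKKT {n k : ℕ} (A : Matrix (Fin n) (Fin n) ℝ) (μ : ℝ)
    (Y : Matrix (Fin n) (Fin k) ℝ) (s γ g l : Fin n → ℝ) (lam β : ℝ) : Prop :=
  (gLap A - lam • gDegMat A - β • vecMulVec (gDeg A) (gDeg A) - Matrix.diagonal γ) * Y = 0 ∧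
  (∀ i, l i - γ i - g i = 0) ∧
  (Yᵀ * gDegMat A * Y).trace = 1 ∧
  gDeg A ⬝ᵥ ((Y * Yᵀ) *ᵥ gDeg A) = 0 ∧
  (∀ i, (Y * Yᵀ) i i + s i = (1 - μ) / (μ * gVolG A)) ∧
  (∀ i, 0 ≤ s i) ∧
  (∀ i, s i ≤ (1 - 2*μ) / (μ * (1 - μ) * gVolG A)) ∧
  (∀ i, 0 ≤ l i) ∧ (∀ i, 0 ≤ g i) ∧
  g ⬝ᵥ s = 0 ∧
  l ⬝ᵥ (fun i => (1 - 2*μ) / (μ * (1 - μ) * gVolG A) - s i) = 0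

/-- The optimal value of the perturbed μ-conductance SDP, whose objective is
`Tr((L + θI)X)` over the same feasible region. -/
def lamMuSdpPert {n : ℕ} (A : Matrix (Fin n) (Fin n) ℝ) (μ θ : ℝ) : ℝ :=
  sInf {r | ∃ X : Matrix (Fin n) (Fin n) ℝ, sdpFeasible A μ X ∧
    r = ((gLap A + θ • (1 : Matrix (Fin n) (Fin n) ℝ)) * X).trace}

/-!
Weak duality. With `m ≤ Xᵢᵢ ≤ u` the SDP's diagonal bounds, stationarity and complementary
slackness turn the objective at the KKT point into the dual objective `λ* + Σᵢ (m lᵢ* − u gᵢ*)`;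
this uses `u = m + (1 − 2μ)/(μ(1 − μ)Vol(G))`, the upper bound on `s*`. For any feasible `X`,
writing `L + θI = Z* + λ*D + β*ddᵀ + Diag(l* − g*)` and using `Tr(Z*X) ≥ 0` bounds
`Tr((L + θI)X)` below by the same dual objective. Finally `Y*Y*ᵀ` is feasible, so the infimum
is taken over a nonempty set.
-/

namespace Matrix

variable {ι κ : Type*} [Fintype ι]

open scoped ComplexOrder MatrixOrder in
theorem PosSemidef.trace_mul_nonneg {𝕜 : Type*} [RCLike 𝕜] {A B : Matrix ι ι 𝕜}
    (hA : A.PosSemidef) (hB : B.PosSemidef) : 0 ≤ (A * B).trace := by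
  classical
  obtain ⟨C, rfl⟩ := CStarAlgebra.nonneg_iff_eq_star_mul_self.mp hB.nonneg
  rw [← Matrix.mul_assoc, trace_mul_cycle, star_eq_conjTranspose]
  exact (hA.mul_mul_conjTranspose_same C).trace_nonneg

theorem trace_diagonal_mul {R : Type*} [NonUnitalNonAssocSemiring R] [DecidableEq ι]
    (v : ι → R) (X : Matrix ι ι R) : (diagonal v * X).trace = ∑ i, v i * X i i := by
  simp [trace, diagonal_mul]

theorem trace_vecMulVec_mul {R : Type*} [NonUnitalCommSemiring R] (a b : ι → R)
    (X : Matrix ι ι R) : (vecMulVec a b * X).trace = b ⬝ᵥ (X *ᵥ a) := by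
  rw [vecMulVec_mul, trace_vecMulVec, dotProduct_comm, dotProduct_mulVec]

theorem trace_transpose_mul_mul [Fintype κ] {R : Type*} [NonUnitalCommSemiring R]
    (M : Matrix ι ι R) (Y : Matrix ι κ R) : (Yᵀ * M * Y).trace = (M * (Y * Yᵀ)).trace := by
  rw [trace_mul_cycle, trace_mul_comm]

end Matrix

section WeakDuality

variable {ι : Type*} [Fintype ι] [DecidableEq ι]

theorem trace_mul_eq_trace_sub_mul_add (C D Q X : Matrix ι ι ℝ) (lam β : ℝ) (γ : ι → ℝ) :
    (C * X).trace = ((C - lam • D - β • Q - diagonal γ) * X).trace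
      + lam * (D * X).trace + β * (Q * X).trace + ∑ i, γ i * X i i := by
  simp only [sub_mul, smul_mul, trace_sub, trace_smul, trace_diagonal_mul, smul_eq_mul]
  ring

theorem le_trace_mul_of_posSemidef_sub {C D Q X : Matrix ι ι ℝ} {lam β u m : ℝ}
    {γ l g : ι → ℝ} (hZ : (C - lam • D - β • Q - diagonal γ).PosSemidef) (hγ : γ = l - g)
    (hl : ∀ i, 0 ≤ l i) (hg : ∀ i, 0 ≤ g i) (hX : X.PosSemidef) (hXD : (D * X).trace = 1)
    (hXQ : (Q * X).trace = 0) (hXu : ∀ i, X i i ≤ u) (hXm : ∀ i, m ≤ X i i) :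
    lam + ∑ i, (m * l i - u * g i) ≤ (C * X).trace := by
  have hdiag : ∑ i, (m * l i - u * g i) ≤ ∑ i, γ i * X i i := by
    refine Finset.sum_le_sum fun i _ => ?_
    have hli := mul_le_mul_of_nonneg_left (hXm i) (hl i)
    have hgi := mul_le_mul_of_nonneg_left (hXu i) (hg i)
    rw [hγ, Pi.sub_apply]
    linarith
  rw [trace_mul_eq_trace_sub_mul_add C D Q X lam β γ, hXD, hXQ]
  linarith [hZ.trace_mul_nonneg hX]

omit [DecidableEq ι] in
theorem sum_mul_sub_eq_of_complementary {u m c : ℝ} {s l g : ι → ℝ} (hu : u = m + c)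
    (hgs : g ⬝ᵥ s = 0) (hls : l ⬝ᵥ (fun i => c - s i) = 0) :
    ∑ i, (l i - g i) * (u - s i) = ∑ i, (m * l i - u * g i) := by
  have hsplit : ∀ i, (l i - g i) * (u - s i) = (m * l i - u * g i) + l i * (c - s i) + g i * s i :=
    fun i => by rw [hu]; ring
  simp only [hsplit, Finset.sum_add_distrib]
  simp only [dotProduct] at hgs hls
  rw [hls, hgs, add_zero, add_zero]

end WeakDuality

theorem upper_diag_bound_eq_lower_add_slack_bound {μ V : ℝ} (hμ : μ ≠ 0) (hμ' : 1 - μ ≠ 0) :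
    (1 - μ) / (μ * V) = μ / ((1 - μ) * V) + (1 - 2 * μ) / (μ * (1 - μ) * V) := by
  rcases eq_or_ne V 0 with rfl | hV
  · simp
  · field_simp
    ring

namespace lrKKT

variable {n k : ℕ} {A : Matrix (Fin n) (Fin n) ℝ} {μ : ℝ} {Y : Matrix (Fin n) (Fin k) ℝ}
  {s γ g l : Fin n → ℝ} {lam β : ℝ}

theorem gamma_eq (h : lrKKT A μ Y s γ g l lam β) : γ = l - g :=
  funext fun i => by rw [Pi.sub_apply]; linarith [h.2.1 i]

theorem trace_vecMulVec_mul_self (h : lrKKT A μ Y s γ g l lam β) :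
    (vecMulVec (gDeg A) (gDeg A) * (Y * Yᵀ)).trace = 0 := by
  rw [trace_vecMulVec_mul]
  exact h.2.2.2.1

theorem sdpFeasible_mul_transpose (h : lrKKT A μ Y s γ g l lam β) (hμ : μ ≠ 0)
    (hμ' : 1 - μ ≠ 0) : sdpFeasible A μ (Y * Yᵀ) := by
  have ⟨_, _, hD, _, hdiag, hs0, hsc, _⟩ := h
  refine ⟨posSemidef_self_mul_conjTranspose Y, ?_, h.trace_vecMulVec_mul_self, fun i => ?_,
    fun i => ?_⟩
  · rwa [← trace_transpose_mul_mul]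
  · linarith [hdiag i, hs0 i]
  · linarith [hdiag i, hsc i, upper_diag_bound_eq_lower_add_slack_bound (V := gVolG A) hμ hμ']

theorem trace_eq_dual (h : lrKKT A μ Y s γ g l lam β) (hμ : μ ≠ 0) (hμ' : 1 - μ ≠ 0) :
    (Yᵀ * gLap A * Y).trace
      = lam + ∑ i, (μ / ((1 - μ) * gVolG A) * l i - (1 - μ) / (μ * gVolG A) * g i) := by
  have ⟨hstat, _, hD, _, hdiag, _, _, _, _, hgs, hls⟩ := h
  have hZ : ((gLap A - lam • gDegMat A - β • vecMulVec (gDeg A) (gDeg A) - diagonal γ)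
      * (Y * Yᵀ)).trace = 0 := by
    rw [← trace_transpose_mul_mul, Matrix.mul_assoc, hstat, Matrix.mul_zero, trace_zero]
  have hXdiag : ∀ i, (Y * Yᵀ) i i = (1 - μ) / (μ * gVolG A) - s i :=
    fun i => by linarith [hdiag i]
  rw [trace_transpose_mul_mul, trace_mul_eq_trace_sub_mul_add _ _ _ _ lam β γ, hZ,
    ← trace_transpose_mul_mul, hD, h.trace_vecMulVec_mul_self, h.gamma_eq]
  simp only [hXdiag, Pi.sub_apply]
  rw [sum_mul_sub_eq_of_complementary (upper_diag_bound_eq_lower_add_slack_bound hμ hμ') hgs hls]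
  ring

end lrKKT

theorem kkt_obj_le_perturbed_sdp_general {n k : ℕ} (A : Matrix (Fin n) (Fin n) ℝ)
    (μ : ℝ) (hμ0 : 0 < μ) (hμ1 : μ < 1/2)
    (θ : ℝ)
    (Y : Matrix (Fin n) (Fin k) ℝ) (s γ g l : Fin n → ℝ) (lam β : ℝ)
    (hKKT : lrKKT A μ Y s γ g l lam β)
    (hZpsd : (gLap A + θ • (1 : Matrix (Fin n) (Fin n) ℝ) - lam • gDegMat A
        - β • vecMulVec (gDeg A) (gDeg A) - Matrix.diagonal γ).PosSemidef) :
    (Yᵀ * gLap A * Y).trace ≤ lamMuSdpPert A μ θ := by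
  have hμ : μ ≠ 0 := hμ0.ne'
  have hμ' : 1 - μ ≠ 0 := by linarith
  have ⟨_, _, _, _, _, _, _, hl, hg, _⟩ := hKKT
  rw [hKKT.trace_eq_dual hμ hμ']
  refine le_csInf ⟨_, _, hKKT.sdpFeasible_mul_transpose hμ hμ', rfl⟩ ?_
  rintro r ⟨X, ⟨hX, hXD, hXQ, hXu, hXm⟩, rfl⟩
  exact le_trace_mul_of_posSemidef_sub hZpsd hKKT.gamma_eq hl hg hX hXD hXQ hXu hXm

/-- If a KKT point of the low-rank program is such that
`Z* = L + θI − λ*D − β*ddᵀ − Diag(γ*)` is positive semidefinite, then the objective at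
the KKT point is at most the optimum of the perturbed SDP: `Tr(Y*ᵀLY*) ≤ λ̂_μ^sdp`. -/
theorem kkt_obj_le_perturbed_sdp {n k : ℕ} (A : Matrix (Fin n) (Fin n) ℝ)
    (hA_symm : A.IsSymm) (hA_nonneg : ∀ i j, 0 ≤ A i j) (hA_diag : ∀ i, A i i = 0)
    (μ : ℝ) (hμ0 : 0 < μ) (hμ1 : μ < 1/2)
    (θ : ℝ) (hθ : 0 ≤ θ)
    (Y : Matrix (Fin n) (Fin k) ℝ) (s γ g l : Fin n → ℝ) (lam β : ℝ)
    (hKKT : lrKKT A μ Y s γ g l lam β)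
    (hZpsd : (gLap A + θ • (1 : Matrix (Fin n) (Fin n) ℝ) - lam • gDegMat A
        - β • vecMulVec (gDeg A) (gDeg A) - Matrix.diagonal γ).PosSemidef) :
    (Yᵀ * gLap A * Y).trace ≤ lamMuSdpPert A μ θ :=
  kkt_obj_le_perturbed_sdp_general A μ hμ0 hμ1 θ Y s γ g l lam β hKKT hZpsd
end
end
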